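/- arXiv:2501.09511 — 2 statements merged into one kernel-verified Lean document; each statement's English description precedes it below -/
import Mathlib

section
/- For all real numbers x and all positive reals a, b, we have e^{-ax}(1 - e^{-bx}) ≤ b/a. -/
theorem exp_mul_one_sub_exp_le (x a b : ℝ) (ha : 0 < a) (hb : 0 < b) :
    Real.exp (-(a * x)) * (1 - Real.exp (-(b * x))) ≤ b / a := by
  have hE : Real.exp (-(a * x)) * Real.exp (a * x) = 1 := by
    rw [← Real.exp_add]; simp
  have hpos := Real.exp_pos (-(a * x))
  have hdiv : 0 < b / a := div_pos hb ha
  rcases le_or_gt x 0 with hx | hx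
  · have h1 : (1:ℝ) ≤ Real.exp (-(b * x)) := Real.one_le_exp (by nlinarith)
    nlinarith [mul_nonpos_of_nonneg_of_nonpos hpos.le (by linarith : 1 - Real.exp (-(b * x)) ≤ 0)]
  · have h1 : 1 - Real.exp (-(b * x)) ≤ b * x := by
      nlinarith [Real.add_one_le_exp (-(b * x))]
    have h2 : a * x ≤ Real.exp (a * x) := by
      nlinarith [Real.add_one_le_exp (a * x)]
    have h3 : Real.exp (-(a * x)) * (a * x) ≤ 1 := by nlinarith
    rw [le_div_iff₀ ha]
    nlinarith [mul_le_mul_of_nonneg_left h1 hpos.le, mul_le_mul_of_nonneg_left h3 hb.le]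
end

section
/- Let {λ_i}_{i=1}^∞ be non-negative reals with 0 < ∑_i λ_i < ∞ and λ_i > 0 for all i, and let τ_i ~ Exp(λ_i) be independent. Then P(τ_n < inf_{m > n} τ_m for all n) is positive if and only if ∏_{n=1}^∞ λ_n/(∑_{m≥n} λ_m) > 0; moreover for each fixed n, the probability that τ_n is the minimum of {τ_m : m ≥ n} equals λ_n/∑_{m≥n} λ_m. -/
/-!
For `N ≤ M`, the event that each of `τ 0, …, τ (N - 1)` is smaller than all later variables
below `M` has probability `∏_{i < N} λ i / ∑_{i ≤ j < M} λ j`. Induction on `M` proves more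
generally that the integral of `exp (-R τ (N - 1))` over this event is the same product with
`R` added to every denominator: integrating out the independent variable `τ M` multiplies the
weight by `P(τ M > t) = exp (-λ M t)` when `τ M` only has to exceed `τ (N - 1) = t`, and
produces `∫_t^∞ exp (-R x) λ exp (-λ x) dx = λ / (λ + R) · exp (-(λ + R) t)` when `τ M` is the
new last element of the chain. Continuity of measure along `M → ∞` and then `N → ∞` gives both
claims; the partial products decrease, so their limit is their infimum.
-/

open MeasureTheory ProbabilityTheory Real Set Filter Topology
open scoped ENNReal

lemma expMeasure_Iic {r : ℝ} (hr : 0 < r) (x : ℝ) :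
    expMeasure r (Iic x) = ENNReal.ofReal (if 0 ≤ x then 1 - exp (-(r * x)) else 0) := by
  have := isProbabilityMeasure_expMeasure hr
  rw [← ofReal_cdf, cdf_expMeasure_eq hr]

lemma ae_pos_expMeasure {r : ℝ} (hr : 0 < r) : ∀ᵐ x ∂expMeasure r, 0 < x := by
  rw [ae_iff]
  simp only [not_lt]
  exact (expMeasure_Iic hr 0).trans (by simp)

lemma setLIntegral_Ioi_exp_neg_mul_expMeasure {r R a : ℝ} (hr : 0 < r) (hR : 0 ≤ R)
    (ha : 0 ≤ a) :
    ∫⁻ x in Ioi a, ENNReal.ofReal (exp (-(R * x))) ∂expMeasure r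
      = ENNReal.ofReal (r / (r + R) * exp (-((r + R) * a))) := by
  have hrR : -(r + R) < 0 := by linarith
  have hdensity : ∀ x ∈ Ioi a, (exponentialPDF r * fun x => ENNReal.ofReal (exp (-(R * x)))) x
      = ENNReal.ofReal (r * exp (-(r + R) * x)) := by
    intro x hx
    rw [Pi.mul_apply, exponentialPDF_of_nonneg (ha.trans hx.out.le),
      ← ENNReal.ofReal_mul (by positivity), mul_assoc, ← exp_add]
    ring_nf
  rw [show expMeasure r = volume.withDensity (exponentialPDF r) from rfl,
    setLIntegral_withDensity_eq_setLIntegral_mul _ (f := exponentialPDF r)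
      (measurable_exponentialPDFReal r).ennreal_ofReal (by fun_prop) measurableSet_Ioi,
    setLIntegral_congr_fun measurableSet_Ioi hdensity,
    ← ofReal_integral_eq_lintegral_ofReal ((integrableOn_exp_mul_Ioi hrR a).const_mul r)
      (ae_of_all _ fun x => by positivity),
    integral_const_mul, integral_exp_mul_Ioi hrR]
  congr 1
  field_simp

lemma expMeasure_Ioi {r a : ℝ} (hr : 0 < r) (ha : 0 ≤ a) :
    expMeasure r (Ioi a) = ENNReal.ofReal (exp (-(r * a))) := by
  simpa [hr.ne'] using setLIntegral_Ioi_exp_neg_mul_expMeasure hr le_rfl ha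

lemma map_eq_expMeasure_of_tail {Ω : Type*} [MeasurableSpace Ω] {P : Measure Ω}
    [IsProbabilityMeasure P] {r : ℝ} (hr : 0 < r) {X : Ω → ℝ} (hX : Measurable X)
    (htail : ∀ t, 0 ≤ t → P {ω | t < X ω} = ENNReal.ofReal (exp (-(r * t)))) :
    P.map X = expMeasure r := by
  have hcdf : ∀ t, 0 ≤ t → P (X ⁻¹' Iic t) = ENNReal.ofReal (1 - exp (-(r * t))) := by
    intro t ht
    have hcompl : X ⁻¹' Iic t = {ω | t < X ω}ᶜ := by ext; simp
    rw [hcompl, prob_compl_eq_one_sub (measurableSet_lt measurable_const hX), htail t ht,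
      ENNReal.ofReal_sub _ (exp_pos _).le, ENNReal.ofReal_one]
  refine Measure.ext_of_Iic _ _ fun x => ?_
  rw [Measure.map_apply hX measurableSet_Iic, expMeasure_Iic hr]
  split_ifs with hx
  · exact hcdf x hx
  · rw [ENNReal.ofReal_zero]
    refine le_antisymm ?_ zero_le
    calc P (X ⁻¹' Iic x) ≤ P (X ⁻¹' Iic 0) :=
          measure_mono (preimage_mono (Iic_subset_Iic.2 (le_of_not_ge hx)))
      _ = 0 := by simp [hcdf 0 le_rfl]

lemma ProbabilityTheory.IndepFun.lintegral_comp_eq_lintegral_lintegral {Ω α β : Type*}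
    [MeasurableSpace Ω] [MeasurableSpace α] [MeasurableSpace β] {P : Measure Ω} [IsFiniteMeasure P]
    {X : Ω → α} {Y : Ω → β} (hXY : IndepFun X Y P) (hX : Measurable X) (hY : Measurable Y)
    {F : α × β → ℝ≥0∞} (hF : Measurable F) :
    ∫⁻ ω, F (X ω, Y ω) ∂P = ∫⁻ ω, ∫⁻ x, F (x, Y ω) ∂(P.map X) ∂P := by
  calc ∫⁻ ω, F (X ω, Y ω) ∂P = ∫⁻ p, F p ∂(P.map fun ω => (X ω, Y ω)) :=
        (lintegral_map hF (hX.prodMk hY)).symm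
    _ = ∫⁻ p, F p ∂((P.map X).prod (P.map Y)) := by
        rw [(indepFun_iff_map_prod_eq_prod_map_map hX.aemeasurable hY.aemeasurable).1 hXY]
    _ = ∫⁻ y, ∫⁻ x, F (x, y) ∂(P.map X) ∂(P.map Y) := lintegral_prod_symm F hF.aemeasurable
    _ = ∫⁻ ω, ∫⁻ x, F (x, Y ω) ∂(P.map X) ∂P := lintegral_map hF.lintegral_prod_left' hY

lemma ProbabilityTheory.iIndepFun.exists_indepFun_eq_of_lt {Ω β : Type*} [MeasurableSpace Ω]
    [MeasurableSpace β] [Zero β] {P : Measure Ω} {τ : ℕ → Ω → β} (hτ : ∀ i, Measurable (τ i))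
    (hindep : iIndepFun τ P) (M : ℕ) :
    ∃ Y : Ω → ℕ → β, Measurable Y ∧ (∀ ω, ∀ i < M, Y ω i = τ i ω) ∧ IndepFun (τ M) Y P := by
  have hdisj : Disjoint ({M} : Finset ℕ) (Finset.range M) := by simp
  have hext : Measurable fun (v : Finset.range M → β) i =>
      if h : i < M then v ⟨i, Finset.mem_range.2 h⟩ else 0 :=
    measurable_pi_lambda _ fun i => by by_cases h : i < M <;> simp [h, measurable_pi_apply]
  refine ⟨fun ω i => if i < M then τ i ω else 0,
    measurable_pi_lambda _ fun i => by by_cases hi : i < M <;> simp [hi, hτ i],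
    fun ω i hi => if_pos hi, ?_⟩
  exact (hindep.indepFun_finset _ _ hdisj hτ).comp (_mγ := inferInstance)
    (_mγ' := inferInstance) (φ := fun v => v ⟨M, Finset.mem_singleton_self M⟩)
    (measurable_pi_apply _) hext

lemma measure_iInter_eq_ofReal_of_tendsto {Ω : Type*} [MeasurableSpace Ω] {P : Measure Ω}
    [IsFiniteMeasure P] {s : ℕ → Set Ω} (hs : ∀ n, MeasurableSet (s n)) (hanti : Antitone s)
    {a : ℕ → ℝ} {l : ℝ} (ha : ∀ᶠ n in atTop, P (s n) = ENNReal.ofReal (a n))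
    (hl : Tendsto a atTop (𝓝 l)) : P (⋂ n, s n) = ENNReal.ofReal l :=
  tendsto_nhds_unique
    (tendsto_measure_iInter_atTop (fun n => (hs n).nullMeasurableSet) hanti
      ⟨0, measure_ne_top _ _⟩)
    ((ENNReal.tendsto_ofReal hl).congr' (ha.mono fun _ hn => hn.symm))

lemma tsum_subtype_le_eq_tsum_add (f : ℕ → ℝ) (n : ℕ) :
    ∑' m : {m // n ≤ m}, f m = ∑' j, f (n + j) :=
  (Function.Injective.tsum_eq (g := fun j => (⟨n + j, n.le_add_right j⟩ : {m // n ≤ m}))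
    (fun a b hab => by simpa using hab)
    (fun m _ => ⟨m.1 - n, Subtype.ext (Nat.add_sub_cancel' m.2)⟩)).symm

/-- `x 0 < x 1 < ⋯ < x (N - 1) < min {x j | N ≤ j < M}`. -/
def LeadingMinima {α : Type*} [Preorder α] (N M : ℕ) (x : ℕ → α) : Prop :=
  ∀ i j, i < j → j < M → i < N → x i < x j

section Preorder

variable {α : Type*} [Preorder α]

lemma leadingMinima_congr {N M : ℕ} {x y : ℕ → α} (h : ∀ i < M, x i = y i) :
    LeadingMinima N M x ↔ LeadingMinima N M y := by
  constructor <;> intro H i j hij hjM hiN <;>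
    simpa [h i (hij.trans hjM), h j hjM] using H i j hij hjM hiN

lemma LeadingMinima.mono {N N' M M' : ℕ} {x : ℕ → α} (hN : N' ≤ N) (hM : M' ≤ M)
    (h : LeadingMinima N M x) : LeadingMinima N' M' x :=
  fun i j hij hjM hiN => h i j hij (by omega) (by omega)

lemma leadingMinima_succ_iff {N M : ℕ} {x : ℕ → α} (hN : 0 < N) (hNM : N ≤ M) :
    LeadingMinima N (M + 1) x ↔ LeadingMinima N M x ∧ x (N - 1) < x M := by
  refine ⟨fun h => ⟨h.mono le_rfl M.le_succ, h _ _ (by omega) (by omega) (by omega)⟩, ?_⟩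
  rintro ⟨h, hlast⟩ i j hij hjM hiN
  rcases Nat.lt_succ_iff_lt_or_eq.1 hjM with hj | rfl
  · exact h i j hij hj hiN
  · rcases (Nat.le_sub_one_of_lt hiN).lt_or_eq with hi | rfl
    · exact (h i (N - 1) hi (by omega) hiN).trans hlast
    · exact hlast

lemma leadingMinima_succ_self {M : ℕ} {x : ℕ → α} :
    LeadingMinima (M + 1) (M + 1) x ↔ LeadingMinima M (M + 1) x :=
  ⟨fun h => h.mono M.le_succ le_rfl, fun h i j hij hjM _ => h i j hij hjM (by omega)⟩

end Preorder

lemma measurableSet_leadingMinima (N M : ℕ) :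
    MeasurableSet {x : ℕ → ℝ | LeadingMinima N M x} := by
  simp only [LeadingMinima, ofPred_forall]
  exact .iInter fun i => .iInter fun j => .iInter fun _ => .iInter fun _ => .iInter fun _ =>
    measurableSet_lt (measurable_pi_apply i) (measurable_pi_apply j)

section
variable {Ω : Type*} [MeasurableSpace Ω] {P : Measure Ω} {τ : ℕ → Ω → ℝ}

lemma measurableSet_setOf_leadingMinima (hτ : ∀ i, Measurable (τ i)) (N M : ℕ) :
    MeasurableSet {ω | LeadingMinima N M (τ · ω)} :=
  measurable_pi_lambda _ hτ (measurableSet_leadingMinima N M)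

lemma setLIntegral_leadingMinima_succ [IsFiniteMeasure P] (hτ : ∀ i, Measurable (τ i))
    (hindep : iIndepFun τ P) {N M : ℕ} (hN : 0 < N) (hNM : N ≤ M) {g h : ℝ → ℝ≥0∞}
    (hg : Measurable g) (hh : Measurable h) :
    ∫⁻ ω in {ω | LeadingMinima N (M + 1) (τ · ω)}, h (τ (N - 1) ω) * g (τ M ω) ∂P
      = ∫⁻ ω in {ω | LeadingMinima N M (τ · ω)},
          h (τ (N - 1) ω) * ∫⁻ x in Ioi (τ (N - 1) ω), g x ∂(P.map (τ M)) ∂P := by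
  obtain ⟨Y, hY, hYτ, hindY⟩ := hindep.exists_indepFun_eq_of_lt hτ M
  set S : Set (ℝ × (ℕ → ℝ)) := {p | LeadingMinima N M p.2 ∧ p.2 (N - 1) < p.1}
  have hS : MeasurableSet S := (measurable_snd (measurableSet_leadingMinima N M)).inter
    (measurableSet_lt ((measurable_pi_apply _).comp measurable_snd) measurable_fst)
  set F : ℝ × (ℕ → ℝ) → ℝ≥0∞ := S.indicator fun p => h (p.2 (N - 1)) * g p.1
  have hF : Measurable F := ((hh.comp ((measurable_pi_apply _).comp measurable_snd)).mul
    (hg.comp measurable_fst)).indicator hS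
  have hlhs : ∀ ω, {ω | LeadingMinima N (M + 1) (τ · ω)}.indicator
      (fun ω => h (τ (N - 1) ω) * g (τ M ω)) ω = F (τ M ω, Y ω) := by
    intro ω
    have hlast := hYτ ω (N - 1) (by omega)
    have hmem : ω ∈ {ω | LeadingMinima N (M + 1) (τ · ω)} ↔ (τ M ω, Y ω) ∈ S := by
      simp only [S, mem_ofPred_eq]
      rw [leadingMinima_succ_iff hN hNM, leadingMinima_congr (hYτ ω), hlast]
    simp only [F]
    by_cases hω : (τ M ω, Y ω) ∈ S
    · rw [indicator_of_mem (hmem.2 hω), indicator_of_mem hω, ← hlast]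
    · rw [indicator_of_notMem (hmem.not.2 hω), indicator_of_notMem hω]
  have hinner : ∀ ω, ∫⁻ x, F (x, Y ω) ∂(P.map (τ M))
      = {ω | LeadingMinima N M (τ · ω)}.indicator (fun ω => h (τ (N - 1) ω) *
          ∫⁻ x in Ioi (τ (N - 1) ω), g x ∂(P.map (τ M))) ω := by
    intro ω
    by_cases hω : LeadingMinima N M (τ · ω)
    · rw [indicator_of_mem hω, ← lintegral_const_mul _ hg,
        ← lintegral_indicator measurableSet_Ioi]
      congr 1
      ext x
      simp [F, S, indicator, (leadingMinima_congr (hYτ ω)).2 hω, hYτ ω (N - 1) (by omega)]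
    · simp [F, S, hω, (leadingMinima_congr (hYτ ω)).not.2 hω]
  rw [← lintegral_indicator (measurableSet_setOf_leadingMinima hτ _ _),
    ← lintegral_indicator (measurableSet_setOf_leadingMinima hτ _ _)]
  simp_rw [hlhs]
  rw [hindY.lintegral_comp_eq_lintegral_lintegral (hτ M) hY hF]
  simp_rw [hinner]

end

structure IndepExpSeq {Ω : Type*} [MeasurableSpace Ω] (P : Measure Ω) (τ : ℕ → Ω → ℝ)
    (lam : ℕ → ℝ) : Prop where
  measurable : ∀ i, Measurable (τ i)
  indep : iIndepFun τ P
  rate_pos : ∀ i, 0 < lam i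
  map_eq : ∀ i, P.map (τ i) = expMeasure (lam i)

namespace IndepExpSeq

variable {Ω : Type*} [MeasurableSpace Ω] {P : Measure Ω} {τ : ℕ → Ω → ℝ} {lam : ℕ → ℝ}

lemma shift (h : IndepExpSeq P τ lam) (n : ℕ) :
    IndepExpSeq P (fun j => τ (n + j)) (fun j => lam (n + j)) where
  measurable j := h.measurable (n + j)
  indep := h.indep.precomp (add_right_injective n)
  rate_pos j := h.rate_pos (n + j)
  map_eq j := h.map_eq (n + j)

lemma ae_pos (h : IndepExpSeq P τ lam) (i : ℕ) : ∀ᵐ ω ∂P, 0 < τ i ω :=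
  ae_of_ae_map (h.measurable i).aemeasurable (h.map_eq i ▸ ae_pos_expMeasure (h.rate_pos i))

lemma lintegral_exp_neg_mul (h : IndepExpSeq P τ lam) (i : ℕ) {R : ℝ} (hR : 0 ≤ R) :
    ∫⁻ ω, ENNReal.ofReal (exp (-(R * τ i ω))) ∂P = ENNReal.ofReal (lam i / (lam i + R)) := by
  rw [← lintegral_map (f := fun x => ENNReal.ofReal (exp (-(R * x)))) (by fun_prop)
      (h.measurable i), h.map_eq,
    ← Measure.restrict_eq_self_of_ae_mem (s := Ioi 0) (ae_pos_expMeasure (h.rate_pos i)),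
    setLIntegral_Ioi_exp_neg_mul_expMeasure (h.rate_pos i) hR le_rfl]
  simp

variable [IsProbabilityMeasure P]

lemma setLIntegral_leadingMinima_succ_of_le (h : IndepExpSeq P τ lam) {N M : ℕ} (hN : 0 < N)
    (hNM : N ≤ M) (R : ℝ) :
    ∫⁻ ω in {ω | LeadingMinima N (M + 1) (τ · ω)},
        ENNReal.ofReal (exp (-(R * τ (N - 1) ω))) ∂P
      = ∫⁻ ω in {ω | LeadingMinima N M (τ · ω)},
          ENNReal.ofReal (exp (-((R + lam M) * τ (N - 1) ω))) ∂P := by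
  calc _ = ∫⁻ ω in {ω | LeadingMinima N (M + 1) (τ · ω)},
          ENNReal.ofReal (exp (-(R * τ (N - 1) ω))) * (fun _ => 1) (τ M ω) ∂P := by simp
    _ = ∫⁻ ω in {ω | LeadingMinima N M (τ · ω)},
          ENNReal.ofReal (exp (-(R * τ (N - 1) ω))) *
            ∫⁻ x in Ioi (τ (N - 1) ω), 1 ∂(P.map (τ M)) ∂P :=
        setLIntegral_leadingMinima_succ h.measurable h.indep hN hNM measurable_const
          (h := fun x => ENNReal.ofReal (exp (-(R * x)))) (by fun_prop)
    _ = _ := by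
      refine lintegral_congr_ae (ae_restrict_of_ae ?_)
      filter_upwards [h.ae_pos (N - 1)] with ω hω
      rw [h.map_eq, setLIntegral_one, expMeasure_Ioi (h.rate_pos M) hω.le,
        ← ENNReal.ofReal_mul (exp_pos _).le, ← exp_add]
      ring_nf

lemma setLIntegral_leadingMinima_succ_self (h : IndepExpSeq P τ lam) {M : ℕ} (hM : 0 < M)
    {R : ℝ} (hR : 0 ≤ R) :
    ∫⁻ ω in {ω | LeadingMinima (M + 1) (M + 1) (τ · ω)},
        ENNReal.ofReal (exp (-(R * τ M ω))) ∂P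
      = ENNReal.ofReal (lam M / (lam M + R)) * ∫⁻ ω in {ω | LeadingMinima M M (τ · ω)},
          ENNReal.ofReal (exp (-((R + lam M) * τ (M - 1) ω))) ∂P := by
  simp_rw [leadingMinima_succ_self]
  calc _ = ∫⁻ ω in {ω | LeadingMinima M (M + 1) (τ · ω)},
          (fun _ => 1) (τ (M - 1) ω) * ENNReal.ofReal (exp (-(R * τ M ω))) ∂P := by simp
    _ = ∫⁻ ω in {ω | LeadingMinima M M (τ · ω)}, 1 *
          ∫⁻ x in Ioi (τ (M - 1) ω), ENNReal.ofReal (exp (-(R * x))) ∂(P.map (τ M)) ∂P :=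
        setLIntegral_leadingMinima_succ h.measurable h.indep hM le_rfl
          (g := fun x => ENNReal.ofReal (exp (-(R * x)))) (by fun_prop) measurable_const
    _ = ∫⁻ ω in {ω | LeadingMinima M M (τ · ω)}, ENNReal.ofReal (lam M / (lam M + R)) *
          ENNReal.ofReal (exp (-((R + lam M) * τ (M - 1) ω))) ∂P := by
      refine lintegral_congr_ae (ae_restrict_of_ae ?_)
      filter_upwards [h.ae_pos (M - 1)] with ω hω
      rw [one_mul, h.map_eq, setLIntegral_Ioi_exp_neg_mul_expMeasure (h.rate_pos M) hR hω.le,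
        ENNReal.ofReal_mul (div_nonneg (h.rate_pos M).le (by linarith [h.rate_pos M])),
        add_comm R]
    _ = _ := lintegral_const_mul' _ _ ENNReal.ofReal_ne_top

lemma setLIntegral_leadingMinima_exp (h : IndepExpSeq P τ lam) {N M : ℕ} (hN : 0 < N)
    (hNM : N ≤ M) {R : ℝ} (hR : 0 ≤ R) :
    ∫⁻ ω in {ω | LeadingMinima N M (τ · ω)}, ENNReal.ofReal (exp (-(R * τ (N - 1) ω))) ∂P
      = ENNReal.ofReal (∏ i ∈ Finset.range N, lam i / (R + ∑ j ∈ Finset.Ico i M, lam j)) := by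
  induction M generalizing N R with
  | zero => omega
  | succ M ih =>
    have hRM : 0 ≤ R + lam M := by linarith [h.rate_pos M]
    have hsum : ∀ i ≤ M, R + ∑ j ∈ Finset.Ico i (M + 1), lam j
        = R + lam M + ∑ j ∈ Finset.Ico i M, lam j := fun i hi => by
      rw [Finset.sum_Ico_succ_top hi]; ring
    rcases hNM.lt_or_eq with hlt | rfl
    · rw [h.setLIntegral_leadingMinima_succ_of_le hN (by omega), ih hN (by omega) hRM]
      refine congrArg _ (Finset.prod_congr rfl fun i hi => ?_)
      rw [hsum i (by simp at hi; omega)]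
    · rcases Nat.eq_zero_or_pos M with rfl | hM
      · have huniv : {ω | LeadingMinima 1 1 (τ · ω)} = univ :=
          eq_univ_of_forall fun ω i j hij hj _ => by omega
        rw [huniv, Measure.restrict_univ, zero_add, Nat.sub_self, h.lintegral_exp_neg_mul 0 hR]
        simp [add_comm R]
      · rw [Nat.add_sub_cancel, h.setLIntegral_leadingMinima_succ_self hM hR, ih hM le_rfl hRM,
          ← ENNReal.ofReal_mul (div_nonneg (h.rate_pos M).le (by linarith [h.rate_pos M])),
          Finset.prod_range_succ, mul_comm]
        congr 2
        · exact Finset.prod_congr rfl fun i hi => by rw [hsum i (by simp at hi; omega)]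
        · simp [add_comm R]

lemma measure_leadingMinima (h : IndepExpSeq P τ lam) {N M : ℕ} (hNM : N ≤ M) :
    P {ω | LeadingMinima N M (τ · ω)}
      = ENNReal.ofReal (∏ i ∈ Finset.range N, lam i / ∑ j ∈ Finset.Ico i M, lam j) := by
  rcases Nat.eq_zero_or_pos N with rfl | hN
  · have huniv : {ω | LeadingMinima 0 M (τ · ω)} = univ :=
      eq_univ_of_forall fun ω i j _ _ hi => absurd hi (Nat.not_lt_zero i)
    simp [huniv]
  · simpa using h.setLIntegral_leadingMinima_exp hN hNM le_rfl

lemma measure_forall_leadingMinima (h : IndepExpSeq P τ lam) (hsum : Summable lam) (N : ℕ) :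
    P {ω | ∀ M, LeadingMinima N M (τ · ω)}
      = ENNReal.ofReal (∏ i ∈ Finset.range N, lam i / ∑' j, lam (i + j)) := by
  have htail : ∀ i,
      Tendsto (fun M => ∑ j ∈ Finset.Ico i M, lam j) atTop (𝓝 (∑' j, lam (i + j))) :=
    fun i => (((hsum.comp_injective (add_right_injective i)).hasSum.tendsto_sum_nat).comp
      (tendsto_sub_atTop_nat i)).congr fun M => (Finset.sum_Ico_eq_sum_range _ _ _).symm
  have htail_pos : ∀ i, 0 < ∑' j, lam (i + j) := fun i =>
    (hsum.comp_injective (add_right_injective i)).tsum_pos (fun j => (h.rate_pos _).le) 0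
      (h.rate_pos _)
  rw [ofPred_forall]
  refine measure_iInter_eq_ofReal_of_tendsto
    (fun M => measurableSet_setOf_leadingMinima h.measurable N M)
    (fun M M' hMM' ω hω => LeadingMinima.mono le_rfl hMM' hω)
    ((eventually_ge_atTop N).mono fun M hM => h.measure_leadingMinima hM) ?_
  exact tendsto_finsetProd _ fun i _ => tendsto_const_nhds.div (htail i) (htail_pos i).ne'

lemma measure_forall_forall_leadingMinima (h : IndepExpSeq P τ lam) (hsum : Summable lam) :
    P {ω | ∀ N M, LeadingMinima N M (τ · ω)}
      = ENNReal.ofReal (⨅ N, ∏ i ∈ Finset.range N, lam i / ∑' j, lam (i + j)) := by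
  have hsum' : ∀ i, Summable fun j => lam (i + j) := fun i =>
    hsum.comp_injective (add_right_injective i)
  have hfactor : ∀ i, 0 ≤ lam i / ∑' j, lam (i + j) ∧ lam i / ∑' j, lam (i + j) ≤ 1 := by
    intro i
    have hle : lam i ≤ ∑' j, lam (i + j) :=
      (hsum' i).le_tsum 0 (fun j _ => (h.rate_pos _).le)
    exact ⟨div_nonneg (h.rate_pos i).le (by linarith [h.rate_pos i]),
      div_le_one_of_le₀ hle (by linarith [h.rate_pos i])⟩
  have hanti : Antitone fun N => ∏ i ∈ Finset.range N, lam i / ∑' j, lam (i + j) := by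
    refine antitone_nat_of_succ_le fun N => ?_
    rw [Finset.prod_range_succ]
    exact mul_le_of_le_one_right (Finset.prod_nonneg fun i _ => (hfactor i).1) (hfactor N).2
  rw [ofPred_forall]
  refine measure_iInter_eq_ofReal_of_tendsto
    (s := fun N => {ω | ∀ M, LeadingMinima N M (τ · ω)})
    (fun N => by
      simpa only [ofPred_forall] using
        MeasurableSet.iInter fun M => measurableSet_setOf_leadingMinima h.measurable N M)
    (fun N N' hNN' ω hω M => (hω M).mono hNN' le_rfl)
    (Eventually.of_forall fun N => h.measure_forall_leadingMinima hsum N) ?_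
  exact tendsto_atTop_ciInf hanti
    ⟨0, forall_mem_range.2 fun N => Finset.prod_nonneg fun i _ => (hfactor i).1⟩

end IndepExpSeq

theorem urns_filled_in_order {Ω : Type*} [MeasurableSpace Ω] (P : Measure Ω)
    [IsProbabilityMeasure P] (lam : ℕ → ℝ) (hpos : ∀ i, 0 < lam i)
    (hsum : Summable lam) (τ : ℕ → Ω → ℝ) (hτ : ∀ i, Measurable (τ i))
    (hindep : iIndepFun τ P)
    (htail : ∀ i, ∀ t : ℝ, 0 ≤ t →
      P {ω | t < τ i ω} = ENNReal.ofReal (Real.exp (-(lam i * t)))) :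
    (0 < P {ω | ∀ n m : ℕ, n < m → τ n ω < τ m ω} ↔
      0 < ⨅ N : ℕ, ∏ n ∈ Finset.range N, (lam n / ∑' m : {m : ℕ // n ≤ m}, lam m)) ∧
    (∀ n : ℕ, P {ω | ∀ m : ℕ, n < m → τ n ω < τ m ω}
      = ENNReal.ofReal (lam n / ∑' m : {m : ℕ // n ≤ m}, lam m)) := by
  have h : IndepExpSeq P τ lam :=
    ⟨hτ, hindep, hpos, fun i => map_eq_expMeasure_of_tail (hpos i) (hτ i) (htail i)⟩
  simp_rw [tsum_subtype_le_eq_tsum_add]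
  refine ⟨?_, fun n => ?_⟩
  · have hevent : {ω | ∀ n m : ℕ, n < m → τ n ω < τ m ω}
        = {ω | ∀ N M, LeadingMinima N M (τ · ω)} := by
      ext ω
      exact ⟨fun H _ _ i j hij _ _ => H i j hij,
        fun H i j hij => H (i + 1) (j + 1) i j hij j.lt_succ_self i.lt_succ_self⟩
    rw [hevent, h.measure_forall_forall_leadingMinima hsum, ENNReal.ofReal_pos]
  · have hevent : {ω | ∀ m, n < m → τ n ω < τ m ω}
        = {ω | ∀ M, LeadingMinima 1 M (fun j => τ (n + j) ω)} := by
      ext ω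
      refine ⟨fun H M i j hij _ hi => ?_, fun H m hnm => ?_⟩
      · obtain rfl : i = 0 := Nat.lt_one_iff.1 hi
        exact H (n + j) (by omega)
      · obtain ⟨k, rfl⟩ := Nat.exists_eq_add_of_lt hnm
        exact H (k + 2) 0 (k + 1) k.succ_pos (by omega) one_pos
    rw [hevent, (h.shift n).measure_forall_leadingMinima
      (hsum.comp_injective (add_right_injective n)) 1]
    simp
end
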